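/- Let f(t) be the χ²_{k-1} density and F(u) = ∫₀^u f(t) dt. Then the function G(u) = F(u) - 2 f(u)·(u/(k-1))·[B(u/(k+1) - 1) + C(u²/((k+1)(k+3)) - 2u/(k+1) + 1)] has derivative G'(u) = f(u)·(1 + B(u²/((k-1)(k+1)) - 2u/(k-1) + 1) + C(u³/((k-1)(k+1)(k+3)) - 3u²/((k-1)(k+1)) + 3u/(k-1) - 1)) for u > 0, for any real constants B, C and k ≥ 2. -/

import Mathlib

/-!
With `p = (k - 3)/2`, the density `f(t) ∝ t^p e^{-t/2}` satisfies `f' = f (p/u - 1/2)`, and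
`p > -1` makes it integrable at `0`, so `F' = f` by the fundamental theorem of calculus. Writing
`G = F - f R` with `R` a cubic polynomial, the product rule gives `G' = f (1 - (p/u - 1/2) R - R')`,
which is the claimed expression after clearing denominators.
-/

open Real Set MeasureTheory

theorem hasDerivAt_rpow_mul_exp_neg_half {p u : ℝ} (hu : 0 < u) :
    HasDerivAt (fun t => t ^ p * exp (-t / 2)) (u ^ p * exp (-u / 2) * (p / u - 1 / 2)) u := by
  have hexp : HasDerivAt (fun t => exp (-t / 2)) (exp (-u / 2) * (-1 / 2)) u :=
    ((hasDerivAt_neg u).div_const 2).exp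
  refine ((hasDerivAt_rpow_const (p := p) (Or.inl hu.ne')).mul hexp).congr_deriv ?_
  rw [rpow_sub hu, rpow_one]
  field_simp
  ring

theorem continuousOn_rpow_mul_exp_neg_half (p : ℝ) :
    ContinuousOn (fun t => t ^ p * exp (-t / 2)) (Ioi 0) :=
  (continuousOn_id.rpow_const fun _ ht => Or.inl (ne_of_gt ht)).mul (by fun_prop)

theorem intervalIntegrable_rpow_mul_exp_neg_half {p : ℝ} (hp : -1 < p) (u : ℝ) :
    IntervalIntegrable (fun t => t ^ p * exp (-t / 2)) volume 0 u :=
  (intervalIntegral.intervalIntegrable_rpow' hp).mul_continuousOn (by fun_prop)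

theorem hasDerivAt_integral_Ioc_zero {g : ℝ → ℝ} {u : ℝ} (hu : 0 < u)
    (hint : IntervalIntegrable g volume 0 u) (hcont : ContinuousOn g (Ioi 0)) :
    HasDerivAt (fun x => ∫ t in Ioc 0 x, g t) (g u) u := by
  have hu' : Ioi 0 ∈ nhds u := isOpen_Ioi.mem_nhds hu
  refine (intervalIntegral.integral_hasDerivAt_right hint
    (hcont.stronglyMeasurableAtFilter isOpen_Ioi u hu)
    (hcont.continuousAt hu')).congr_of_eventuallyEq ?_
  filter_upwards [hu'] with x hx
  exact intervalIntegral.integral_of_le (le_of_lt hx) |>.symm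

theorem hasDerivAt_cubic (a b c u : ℝ) :
    HasDerivAt (fun x => a * x + b * x ^ 2 + c * x ^ 3) (a + 2 * b * u + 3 * c * u ^ 2) u := by
  refine ((((hasDerivAt_id u).const_mul a).add ((hasDerivAt_pow 2 u).const_mul b)).add
    ((hasDerivAt_pow 3 u).const_mul c)).congr_deriv ?_
  simp only [Nat.cast_ofNat]
  ring

theorem stmt_17 (k : ℕ) (hk : 2 ≤ k) (B C : ℝ)
    (f : ℝ → ℝ)
    (hf : ∀ t, f t = t ^ (((k : ℝ) - 3) / 2) * Real.exp (-t / 2) /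
      (2 ^ (((k : ℝ) - 1) / 2) * Real.Gamma (((k : ℝ) - 1) / 2)))
    (F : ℝ → ℝ) (hF : ∀ u, F u = ∫ t in Set.Ioc (0 : ℝ) u, f t)
    (G : ℝ → ℝ)
    (hG : ∀ u, G u = F u - 2 * f u * (u / ((k : ℝ) - 1)) *
      (B * (u / ((k : ℝ) + 1) - 1) +
       C * (u ^ 2 / (((k : ℝ) + 1) * ((k : ℝ) + 3)) - 2 * u / ((k : ℝ) + 1) + 1)))
    (u : ℝ) (hu : 0 < u) :
    HasDerivAt G
      (f u * (1 + B * (u ^ 2 / (((k : ℝ) - 1) * ((k : ℝ) + 1)) - 2 * u / ((k : ℝ) - 1) + 1) +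
        C * (u ^ 3 / (((k : ℝ) - 1) * ((k : ℝ) + 1) * ((k : ℝ) + 3))
          - 3 * u ^ 2 / (((k : ℝ) - 1) * ((k : ℝ) + 1)) + 3 * u / ((k : ℝ) - 1) - 1))) u := by
  set κ : ℝ := (k : ℝ)
  have hκ : (2 : ℝ) ≤ κ := Nat.ofNat_le_cast.mpr hk
  set c := 2 ^ ((κ - 1) / 2) * Gamma ((κ - 1) / 2)
  have hf_eq : f = fun t => t ^ ((κ - 3) / 2) * exp (-t / 2) / c := funext hf
  have hfd : HasDerivAt f (f u * ((κ - 3) / 2 / u - 1 / 2)) u := by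
    rw [hf_eq]
    exact ((hasDerivAt_rpow_mul_exp_neg_half hu).div_const c).congr_deriv (by ring)
  have hFd : HasDerivAt F (f u) u := by
    have hp : -1 < (κ - 3) / 2 := by linarith
    rw [funext hF]
    refine hasDerivAt_integral_Ioc_zero hu ?_ ?_ <;> rw [hf_eq]
    · exact (intervalIntegrable_rpow_mul_exp_neg_half hp u).div_const c
    · exact (continuousOn_rpow_mul_exp_neg_half _).div_const c
  -- the factor `2 x / (k - 1) * (B (…) + C (…))` of `G`, expanded in powers of `x`
  have hRd := hasDerivAt_cubic (2 / (κ - 1) * (C - B)) (2 / (κ - 1) * ((B - 2 * C) / (κ + 1)))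
    (2 / (κ - 1) * (C / ((κ + 1) * (κ + 3)))) u
  have hG_eq : G = fun x => F x - f x * (2 / (κ - 1) * (C - B) * x +
      2 / (κ - 1) * ((B - 2 * C) / (κ + 1)) * x ^ 2 +
      2 / (κ - 1) * (C / ((κ + 1) * (κ + 3))) * x ^ 3) :=
    funext fun x => by rw [hG]; ring
  rw [hG_eq]
  refine (hFd.sub (hfd.mul hRd)).congr_deriv ?_
  have : κ - 1 ≠ 0 := by linarith
  have : κ + 1 ≠ 0 := by linarith
  have : κ + 3 ≠ 0 := by linarith
  field_simp
  ring
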